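/- Let D be a probability distribution on X × Y with marginal D_X on X, and let f, f' : X → ℝ^C be score functions (all relevant integrands measurable and integrable). Then the margin disparity is bounded by the sum of margin risks: disp^{(ρ)}_{D_X}(f', f) ≤ R^{(ρ)}_D(f') + R^{(ρ)}_D(f). -/

import Mathlib

noncomputable section
open MeasureTheory Finset Set

namespace RobustUDA

/-- The input space: `ℝ^d`. -/
abbrev Inp (d : ℕ) := Fin d → ℝ

variable {d C : ℕ}

/-- `ℓ_p`-norm of a vector in `ℝ^d`. -/
def pnorm (p : ℝ) (v : Inp d) : ℝ := (∑ i, |v i| ^ p) ^ (1 / p)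

/-- The `ε`-ball centered at `x` in the `ℓ_p`-norm. -/
def ball (p ε : ℝ) (x : Inp d) : Set (Inp d) := {x' | pnorm p (fun i => x i - x' i) ≤ ε}

open Classical in
/-- Indicator function of a proposition, real valued. -/
def ind (P : Prop) : ℝ := if P then 1 else 0

/-- The ramp function `Φ_ρ`. -/
def ramp (ρ t : ℝ) : ℝ := if t ≤ 0 then 1 else if t ≤ ρ then 1 - t / ρ else 0

/-- The margin `M_f(x,y) = f_y(x) - max_{y' ≠ y} f_{y'}(x)`. -/
def margin (f : Inp d → Fin C → ℝ) (x : Inp d) (y : Fin C) : ℝ :=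
  f x y - sSup (f x '' {y' | y' ≠ y})

/-- Standard (0-1) risk of a classifier `hf` on a distribution `D` on `X × Y`. -/
def stdRisk (D : Measure (Inp d × Fin C)) (hf : Inp d → Fin C) : ℝ :=
  ∫ z, ind (z.2 ≠ hf z.1) ∂D

/-- Robust (0-1) risk of a classifier `hf`. -/
def robustRisk (p ε : ℝ) (D : Measure (Inp d × Fin C)) (hf : Inp d → Fin C) : ℝ :=
  ∫ z, sSup ((fun x' => ind (z.2 ≠ hf x')) '' ball p ε z.1) ∂D

/-- Margin risk `R^{(ρ)}_D(f)`. -/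
def marginRisk (ρ : ℝ) (D : Measure (Inp d × Fin C)) (f : Inp d → Fin C → ℝ) : ℝ :=
  ∫ z, ramp ρ (margin f z.1 z.2) ∂D

/-- Robust margin risk `R^{rob,(ρ)}_D(f)`. -/
def robustMarginRisk (p ε ρ : ℝ) (D : Measure (Inp d × Fin C)) (f : Inp d → Fin C → ℝ) : ℝ :=
  ∫ z, sSup ((fun x' => ramp ρ (margin f x' z.2)) '' ball p ε z.1) ∂D

/-- Margin disparity `disp^{(ρ)}_{D_X}(f', f)`, where `hf'` is the classifier induced by `f'`. -/
def marginDisp (ρ : ℝ) (DX : Measure (Inp d)) (hf' : Inp d → Fin C)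
    (f : Inp d → Fin C → ℝ) : ℝ :=
  ∫ x, ramp ρ (margin f x (hf' x)) ∂DX

/-- 0-1 robust disparity `disp^{rob}_{D_X}(f', f)`. -/
def robDisp (p ε : ℝ) (DX : Measure (Inp d)) (hf' hf : Inp d → Fin C) : ℝ :=
  ∫ x, sSup ((fun x' => ind (hf' x ≠ hf x')) '' ball p ε x) ∂DX

/-- Robust margin disparity `disp^{rob,(ρ)}_{D_X}(f', f)`. -/
def robMarginDisp (p ε ρ : ℝ) (DX : Measure (Inp d)) (hf' : Inp d → Fin C)
    (f : Inp d → Fin C → ℝ) : ℝ :=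
  ∫ x, sSup ((fun x' => ramp ρ (margin f x' (hf' x))) '' ball p ε x) ∂DX

/-- Point-wise local Lipschitz constant `L_f(x, ε)` (w.r.t. the `ℓ_p` ball and `ℓ₁` output norm). -/
def locLip (p ε : ℝ) (f : Inp d → Fin C → ℝ) (x : Inp d) : ℝ :=
  sSup ((fun x' => (∑ c, |f x' c - f x c|) / pnorm p (fun i => x' i - x i)) ''
    {x' | x' ∈ ball p ε x ∧ x' ≠ x})

/-- Topological support of a measure on the input space. -/
def msupport (μ : Measure (Inp d)) : Set (Inp d) :=
  {x | ∀ U : Set (Inp d), IsOpen U → x ∈ U → 0 < μ U}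

/-- Local Lipschitz constant `L_f(D_X, ε)` over the support of `D_X`. -/
def locLipOn (p ε : ℝ) (f : Inp d → Fin C → ℝ) (μ : Measure (Inp d)) : ℝ :=
  sSup (locLip p ε f '' msupport μ)

/-- Robust margin disparity discrepancy `d^{rob,(ρ)}_{f,F}(S_X, T_X)` where `cl` assigns
to each score function its induced classifier. -/
def discrepancy (p ε ρ : ℝ) (F : Set (Inp d → Fin C → ℝ))
    (cl : (Inp d → Fin C → ℝ) → Inp d → Fin C)
    (SX TX : Measure (Inp d)) (f : Inp d → Fin C → ℝ) : ℝ :=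
  sSup ((fun f' => robMarginDisp p ε ρ TX (cl f') f - marginDisp ρ SX (cl f') f) '' F)

/-- The class `Π₁F` of component functions of score functions in `F`. -/
def Pi1 (F : Set (Inp d → Fin C → ℝ)) : Set (Inp d → ℝ) :=
  {g | ∃ f ∈ F, ∃ y : Fin C, g = fun x => f x y}

/-- The class `Π_H F` where `H = {h_f : f ∈ F}` is given by the classifier assignment `cl`. -/
def PiH (F : Set (Inp d → Fin C → ℝ)) (cl : (Inp d → Fin C → ℝ) → Inp d → Fin C) :
    Set (Inp d → ℝ) :=
  {g | ∃ f ∈ F, ∃ f' ∈ F, g = fun x => f x (cl f' x)}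

/-- Rademacher complexity `ℜ_{n,D}(G)` of a class `G` of real functions on `Z`. -/
def rademacher (n : ℕ) {Z : Type*} [MeasurableSpace Z] (D : Measure Z) (G : Set (Z → ℝ)) : ℝ :=
  ∫ z : Fin n → Z, ∫ σ : Fin n → Bool,
      sSup ((fun g => (n : ℝ)⁻¹ * ∑ i, (if σ i then (1 : ℝ) else -1) * g (z i)) '' G)
    ∂(Measure.pi fun _ => (PMF.uniformOfFintype Bool).toMeasure) ∂(Measure.pi fun _ => D)

lemma ramp_nonneg (ρ t : ℝ) : 0 ≤ ramp ρ t := by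
  unfold ramp
  split_ifs with h₁ h₂
  · exact zero_le_one
  · rw [sub_nonneg, div_le_one (by linarith)]
    exact h₂
  · exact le_rfl

lemma ramp_le_one (ρ t : ℝ) : ramp ρ t ≤ 1 := by
  unfold ramp
  split_ifs with h₁ h₂
  · exact le_rfl
  · have : 0 ≤ t / ρ := div_nonneg (by linarith) (by linarith)
    linarith
  · exact zero_le_one

lemma ramp_of_nonpos {ρ t : ℝ} (ht : t ≤ 0) : ramp ρ t = 1 := if_pos ht

lemma margin_nonpos_of_le {f : Inp d → Fin C → ℝ} {x : Inp d} {y y' : Fin C} (hne : y' ≠ y)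
    (hle : f x y ≤ f x y') : margin f x y ≤ 0 := by
  have : f x y' ≤ sSup (f x '' {c | c ≠ y}) :=
    le_csSup (Set.toFinite _).bddAbove ⟨y', hne, rfl⟩
  rw [margin]
  linarith

/-- If `y'` is the label predicted by `f'` at `x`, then either `y' = y` and the two sides share
the `f`-term, or `f'` misclassifies `(x, y)`, so its margin there is `≤ 0` and its ramp is `1`. -/
lemma ramp_margin_le_add (ρ : ℝ) (f f' : Inp d → Fin C → ℝ) (x : Inp d) (y y' : Fin C)
    (hy' : ∀ c, f' x c ≤ f' x y') :
    ramp ρ (margin f x y') ≤ ramp ρ (margin f' x y) + ramp ρ (margin f x y) := by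
  rcases eq_or_ne y' y with rfl | hne
  · linarith [ramp_nonneg ρ (margin f' x y')]
  · rw [ramp_of_nonpos (margin_nonpos_of_le hne (hy' y))]
    linarith [ramp_le_one ρ (margin f x y'), ramp_nonneg ρ (margin f x y)]

lemma marginDisp_map_fst (ρ : ℝ) (D : Measure (Inp d × Fin C)) (f : Inp d → Fin C → ℝ)
    (hf' : Inp d → Fin C)
    (hmeas : AEStronglyMeasurable (fun x => ramp ρ (margin f x (hf' x))) (D.map Prod.fst)) :
    marginDisp ρ (D.map Prod.fst) hf' f = ∫ z, ramp ρ (margin f z.1 (hf' z.1)) ∂D :=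
  integral_map measurable_fst.aemeasurable hmeas

theorem marginDisp_le_marginRisk_add_marginRisk_general {d C : ℕ}
    (ρ : ℝ)
    (D : Measure (Inp d × Fin C))
    (f f' : Inp d → Fin C → ℝ) (hf' : Inp d → Fin C)
    (hcl' : ∀ x y, f' x y ≤ f' x (hf' x))
    (hint1 : Integrable (fun x => ramp ρ (margin f x (hf' x))) (D.map Prod.fst))
    (hint2 : Integrable (fun z => ramp ρ (margin f' z.1 z.2)) D)
    (hint3 : Integrable (fun z => ramp ρ (margin f z.1 z.2)) D) :
    marginDisp ρ (D.map Prod.fst) hf' f ≤ marginRisk ρ D f' + marginRisk ρ D f := by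
  calc marginDisp ρ (D.map Prod.fst) hf' f
      = ∫ z, ramp ρ (margin f z.1 (hf' z.1)) ∂D :=
        marginDisp_map_fst ρ D f hf' hint1.aestronglyMeasurable
    _ ≤ ∫ z, (ramp ρ (margin f' z.1 z.2) + ramp ρ (margin f z.1 z.2)) ∂D :=
        integral_mono (hint1.comp_measurable measurable_fst) (hint2.add hint3)
          fun z => ramp_margin_le_add ρ f f' z.1 z.2 (hf' z.1) (hcl' z.1)
    _ = marginRisk ρ D f' + marginRisk ρ D f := integral_add hint2 hint3

/-- For a probability distribution `D` on `X × Y` with marginal `D_X`,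
the margin disparity is bounded by the sum of margin risks:
`disp^{(ρ)}_{D_X}(f', f) ≤ R^{(ρ)}_D(f') + R^{(ρ)}_D(f)`. -/
theorem marginDisp_le_marginRisk_add_marginRisk {d C : ℕ} (hC : 2 ≤ C)
    (ρ : ℝ) (hρ : 0 < ρ)
    (D : Measure (Inp d × Fin C)) [IsProbabilityMeasure D]
    (f f' : Inp d → Fin C → ℝ) (hf hf' : Inp d → Fin C)
    (hcl : ∀ x y, f x y ≤ f x (hf x))
    (hcl' : ∀ x y, f' x y ≤ f' x (hf' x))
    (hint1 : Integrable (fun x => ramp ρ (margin f x (hf' x))) (D.map Prod.fst))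
    (hint2 : Integrable (fun z => ramp ρ (margin f' z.1 z.2)) D)
    (hint3 : Integrable (fun z => ramp ρ (margin f z.1 z.2)) D) :
    marginDisp ρ (D.map Prod.fst) hf' f ≤ marginRisk ρ D f' + marginRisk ρ D f :=
  marginDisp_le_marginRisk_add_marginRisk_general ρ D f f' hf' hcl' hint1 hint2 hint3

end RobustUDA
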